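/- arXiv:1304.0060 — 2 statements merged into one kernel-verified Lean document; each statement's English description precedes it below -/
import Mathlib

section
/- Let E be a trace-preserving completely positive map and A an operator with E(A) = A. Write A = (X₊ − X₋) + i(Y₊ − Y₋), where X₊, X₋, Y₊, Y₋ are positive semidefinite with supp(X₊) ⊥ supp(X₋) and supp(Y₊) ⊥ supp(Y₋) (the Jordan decompositions of the Hermitian and anti-Hermitian parts of A). Then X₊, X₋, Y₊, Y₋ are all fixed points of E. -/
/-!
Since `E` commutes with taking adjoints, the Hermitian part `X₊ - X₋` and the anti-Hermitian
part `Y₊ - Y₋` of a fixed point are fixed. Let `P` be the projection onto `supp X₊`, so that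
`P X₊ = X₊` and `P X₋ = 0`. Taking `tr (P ·)` of `E X₊ - E X₋ = X₊ - X₋` and using
`tr (E X₊) = tr X₊` gives `tr (P E X₋) + tr ((1 - P) E X₊) = 0`. Both terms are traces of
positive operators, so `P E X₋ = 0` and `(1 - P) E X₊ = 0`; compressing the fixed-point
equation by `P` then yields `E X₊ = X₊`. In other words, the Jordan decomposition is the unique
decomposition into positive parts of minimal trace.
-/

open Matrix Filter Topology
open scoped ComplexOrder

/-- The matrix of the orthogonal projection onto a subspace `X`. -/
noncomputable def projMat {d : ℕ} (X : Submodule ℂ (EuclideanSpace ℂ (Fin d))) :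
    Matrix (Fin d) (Fin d) ℂ :=
  Matrix.toEuclideanLin.symm ((X.subtypeL.comp X.orthogonalProjectionOnto).toLinearMap)

/-- The support of an operator: the range of the associated linear map. -/
noncomputable def matSupp {d : ℕ} (A : Matrix (Fin d) (Fin d) ℂ) :
    Submodule ℂ (EuclideanSpace ℂ (Fin d)) :=
  LinearMap.range (Matrix.toEuclideanLin A)

/-- The outer product `|v⟩⟨v|`. -/
noncomputable def outer {d : ℕ} (v : EuclideanSpace ℂ (Fin d)) : Matrix (Fin d) (Fin d) ℂ :=
  fun i j => v i * star (v j)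

/-- The completely positive map `A ↦ ∑ i, E i * A * (E i)†` given by Kraus operators `E`. -/
noncomputable def krausMap {d m : ℕ} (E : Fin m → Matrix (Fin d) (Fin d) ℂ)
    (A : Matrix (Fin d) (Fin d) ℂ) : Matrix (Fin d) (Fin d) ℂ :=
  ∑ i, E i * A * (E i)ᴴ

section StarProjection

variable {n m 𝕜 : Type*} [Fintype n] [RCLike 𝕜]

theorem Matrix.PosSemidef.mul_eq_zero_of_conjTranspose_mul_mul_eq_zero {M : Matrix n n 𝕜}
    {B : Matrix n m 𝕜} (hM : M.PosSemidef) (h : Bᴴ * M * B = 0) : M * B = 0 := by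
  classical
  open scoped MatrixOrder in
  obtain ⟨C, rfl⟩ := CStarAlgebra.nonneg_iff_eq_star_mul_self.mp hM.nonneg
  rw [star_eq_conjTranspose] at h ⊢
  have hCB : C * B = 0 := by
    rw [← conjTranspose_mul_self_eq_zero, conjTranspose_mul]
    simpa only [Matrix.mul_assoc] using h
  rw [Matrix.mul_assoc, hCB, Matrix.mul_zero]

variable {P M : Matrix n n 𝕜}

theorem IsStarProjection.trace_mul_eq (hP : IsStarProjection P) (M : Matrix n n 𝕜) :
    (P * M).trace = (Pᴴ * M * P).trace := by
  rw [← star_eq_conjTranspose, hP.isSelfAdjoint.star_eq, trace_mul_cycle,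
    hP.isIdempotentElem.eq]

theorem IsStarProjection.trace_mul_nonneg (hP : IsStarProjection P) (hM : M.PosSemidef) :
    0 ≤ (P * M).trace :=
  hP.trace_mul_eq M ▸ (hM.conjTranspose_mul_mul_same P).trace_nonneg

theorem IsStarProjection.mul_eq_zero_of_trace_mul_eq_zero (hP : IsStarProjection P)
    (hM : M.PosSemidef) (h : (P * M).trace = 0) : P * M = 0 := by
  rw [hP.trace_mul_eq, (hM.conjTranspose_mul_mul_same P).trace_eq_zero_iff] at h
  have hMP := hM.mul_eq_zero_of_conjTranspose_mul_mul_eq_zero h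
  have := congrArg conjTranspose hMP
  rwa [conjTranspose_mul, hM.isHermitian.eq, ← star_eq_conjTranspose, hP.isSelfAdjoint.star_eq,
    conjTranspose_zero] at this

theorem IsStarProjection.eq_of_sub_eq_sub_of_trace_le [DecidableEq n] {X Y X' Y' : Matrix n n 𝕜}
    (hP : IsStarProjection P) (hPX : P * X = X) (hPY : P * Y = 0)
    (hX' : X'.PosSemidef) (hY' : Y'.PosSemidef) (hsub : X' - Y' = X - Y)
    (htr : X'.trace ≤ X.trace) : X' = X ∧ Y' = Y := by
  have hQ := hP.one_sub
  have htrace_split : X'.trace = (P * X').trace + ((1 - P) * X').trace := by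
    rw [← trace_add, ← Matrix.add_mul, add_sub_cancel, Matrix.one_mul]
  have htrace_P : (P * X').trace - (P * Y').trace = X.trace := by
    rw [← trace_sub, ← Matrix.mul_sub, hsub, Matrix.mul_sub, hPX, hPY, sub_zero]
  have hPY'_nonneg := hP.trace_mul_nonneg hY'
  have hQX'_nonneg := hQ.trace_mul_nonneg hX'
  have hsum : (P * Y').trace + ((1 - P) * X').trace = 0 := by
    refine le_antisymm ?_ (add_nonneg hPY'_nonneg hQX'_nonneg)
    calc (P * Y').trace + ((1 - P) * X').trace = X'.trace - X.trace := by
          rw [htrace_split, ← htrace_P]; ring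
      _ ≤ 0 := sub_nonpos.mpr htr
  obtain ⟨hPY'_tr, hQX'_tr⟩ := (add_eq_zero_iff_of_nonneg hPY'_nonneg hQX'_nonneg).mp hsum
  have hPX' : P * X' = X' := by
    have := hQ.mul_eq_zero_of_trace_mul_eq_zero hX' hQX'_tr
    rwa [Matrix.sub_mul, Matrix.one_mul, sub_eq_zero, eq_comm] at this
  have hX'X : X' = X := by
    have := congrArg (P * ·) hsub
    simpa only [Matrix.mul_sub, hPX', hP.mul_eq_zero_of_trace_mul_eq_zero hY' hPY'_tr, hPX, hPY,
      sub_zero] using this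
  exact ⟨hX'X, by rw [hX'X] at hsub; exact sub_right_injective hsub⟩

end StarProjection

theorem LinearMap.map_eq_self_of_map_add_I_smul_eq_self {M : Type*} [AddCommGroup M]
    [Module ℂ M] [StarAddMonoid M] [StarModule ℂ M] (Φ : M →ₗ[ℂ] M)
    (hΦ : ∀ x, Φ (star x) = star (Φ x))
    {h k : M} (hh : IsSelfAdjoint h) (hk : IsSelfAdjoint k)
    (hfix : Φ (h + Complex.I • k) = h + Complex.I • k) : Φ h = h ∧ Φ k = k := by
  set a := h + Complex.I • k
  have hstar : star a = h - Complex.I • k := by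
    simp [a, star_add, star_smul, hh.star_eq, hk.star_eq, Complex.conj_I, sub_eq_add_neg]
  have hfix_star : Φ (star a) = star a := by rw [hΦ, hfix]
  have h_eq : h = (2⁻¹ : ℂ) • (a + star a) := by rw [hstar]; module
  have k_eq : k = (-(2⁻¹ : ℂ) * Complex.I) • (a - star a) := by
    rw [hstar]
    match_scalars <;> ring_nf
    simp
  constructor
  · rw [h_eq, map_smul, map_add, hfix, hfix_star]
  · rw [k_eq, map_smul, map_sub, hfix, hfix_star]

section Kraus

variable {d m : ℕ} (E : Fin m → Matrix (Fin d) (Fin d) ℂ)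

noncomputable def krausLinearMap :
    Matrix (Fin d) (Fin d) ℂ →ₗ[ℂ] Matrix (Fin d) (Fin d) ℂ where
  toFun := krausMap E
  map_add' M N := by simp only [krausMap, Matrix.mul_add, Matrix.add_mul, Finset.sum_add_distrib]
  map_smul' c M := by
    simp only [krausMap, Matrix.mul_smul, Matrix.smul_mul, Finset.smul_sum, RingHom.id_apply]

@[simp]
theorem krausLinearMap_apply (M : Matrix (Fin d) (Fin d) ℂ) :
    krausLinearMap E M = krausMap E M :=
  rfl

theorem krausMap_conjTranspose (M : Matrix (Fin d) (Fin d) ℂ) :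
    krausMap E Mᴴ = (krausMap E M)ᴴ := by
  simp only [krausMap, conjTranspose_sum, conjTranspose_mul, conjTranspose_conjTranspose,
    Matrix.mul_assoc]

theorem krausMap_trace (hE : ∑ i, (E i)ᴴ * E i = 1) (M : Matrix (Fin d) (Fin d) ℂ) :
    (krausMap E M).trace = M.trace := by
  simp_rw [krausMap, trace_sum, trace_mul_cycle _ M, ← trace_sum, ← Finset.sum_mul, hE,
    Matrix.one_mul]

theorem posSemidef_krausMap {M : Matrix (Fin d) (Fin d) ℂ} (hM : M.PosSemidef) :
    (krausMap E M).PosSemidef :=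
  posSemidef_sum _ fun i _ => hM.mul_mul_conjTranspose_same (E i)

end Kraus

section ProjMat

variable {d : ℕ} (U : Submodule ℂ (EuclideanSpace ℂ (Fin d)))

theorem projMat_eq_symm_toEuclideanCLM :
    projMat U = (toEuclideanCLM (n := Fin d) (𝕜 := ℂ)).symm U.starProjection :=
  rfl

theorem isStarProjection_projMat : IsStarProjection (projMat U) := by
  rw [projMat_eq_symm_toEuclideanCLM]
  exact isStarProjection_starProjection.map
    (toEuclideanCLM (n := Fin d) (𝕜 := ℂ)).symm.toStarAlgHom

theorem toEuclideanCLM_projMat_mul (M : Matrix (Fin d) (Fin d) ℂ) (v) :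
    toEuclideanCLM (n := Fin d) (𝕜 := ℂ) (projMat U * M) v =
      U.starProjection (toEuclideanLin M v) := by
  rw [map_mul, projMat_eq_symm_toEuclideanCLM, StarAlgEquiv.apply_symm_apply]; rfl

theorem projMat_mul_of_matSupp_le {M : Matrix (Fin d) (Fin d) ℂ} (h : matSupp M ≤ U) :
    projMat U * M = M := by
  apply EquivLike.injective (toEuclideanCLM (n := Fin d) (𝕜 := ℂ))
  ext1 v
  rw [toEuclideanCLM_projMat_mul, Submodule.starProjection_eq_self_iff.mpr (h ⟨v, rfl⟩)]
  rfl

theorem projMat_mul_of_matSupp_le_orthogonal {M : Matrix (Fin d) (Fin d) ℂ}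
    (h : matSupp M ≤ Uᗮ) : projMat U * M = 0 := by
  apply EquivLike.injective (toEuclideanCLM (n := Fin d) (𝕜 := ℂ))
  ext1 v
  rw [toEuclideanCLM_projMat_mul, U.starProjection_apply_eq_zero_iff.mpr (h ⟨v, rfl⟩),
    map_zero]
  rfl

end ProjMat

theorem krausMap_fixed_of_sub_fixed {d m : ℕ} (E : Fin m → Matrix (Fin d) (Fin d) ℂ)
    (hE : ∑ i, (E i)ᴴ * E i = 1) {X Y : Matrix (Fin d) (Fin d) ℂ}
    (hX : X.PosSemidef) (hY : Y.PosSemidef)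
    (horth : ∀ x ∈ matSupp X, ∀ y ∈ matSupp Y, inner ℂ x y = (0 : ℂ))
    (hfix : krausMap E (X - Y) = X - Y) :
    krausMap E X = X ∧ krausMap E Y = Y := by
  have hYX : matSupp Y ≤ (matSupp X)ᗮ := fun y hy =>
    (Submodule.mem_orthogonal _ y).mpr fun x hx => horth x hx y hy
  refine (isStarProjection_projMat (matSupp X)).eq_of_sub_eq_sub_of_trace_le
    (projMat_mul_of_matSupp_le _ le_rfl) (projMat_mul_of_matSupp_le_orthogonal _ hYX)
    (posSemidef_krausMap E hX) (posSemidef_krausMap E hY)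
    (((krausLinearMap E).map_sub X Y).symm.trans hfix) (krausMap_trace E hE X).le

/-- The positive parts of the Jordan decomposition of a fixed point of a
trace-preserving CP map are themselves fixed points. -/
theorem stmt5 {d m : ℕ} (E : Fin m → Matrix (Fin d) (Fin d) ℂ)
    (hE : ∑ i, (E i)ᴴ * E i = 1)
    (A Xp Xm Yp Ym : Matrix (Fin d) (Fin d) ℂ)
    (hA : krausMap E A = A)
    (hXp : Xp.PosSemidef) (hXm : Xm.PosSemidef) (hYp : Yp.PosSemidef) (hYm : Ym.PosSemidef)
    (hXorth : ∀ x ∈ matSupp Xp, ∀ y ∈ matSupp Xm, inner ℂ x y = (0 : ℂ))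
    (hYorth : ∀ x ∈ matSupp Yp, ∀ y ∈ matSupp Ym, inner ℂ x y = (0 : ℂ))
    (hdec : A = (Xp - Xm) + Complex.I • (Yp - Ym)) :
    krausMap E Xp = Xp ∧ krausMap E Xm = Xm ∧ krausMap E Yp = Yp ∧ krausMap E Ym = Ym := by
  obtain ⟨hXfix, hYfix⟩ := (krausLinearMap E).map_eq_self_of_map_add_I_smul_eq_self
    (krausMap_conjTranspose E) (hXp.isHermitian.sub hXm.isHermitian)
    (hYp.isHermitian.sub hYm.isHermitian) (hdec ▸ hA)
  obtain ⟨hXp_fix, hXm_fix⟩ := krausMap_fixed_of_sub_fixed E hE hXp hXm hXorth hXfix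
  obtain ⟨hYp_fix, hYm_fix⟩ := krausMap_fixed_of_sub_fixed E hE hYp hYm hYorth hYfix
  exact ⟨hXp_fix, hXm_fix, hYp_fix, hYm_fix⟩
end

section
/- A subspace X is a BSCC of a quantum Markov chain (H, E) if and only if R(φ) = X for every nonzero vector |φ⟩ ∈ X, where R(φ) is the reachable space of |φ⟩. -/
/-!
If `X` is invariant, the spectral decomposition extends invariance from pure states to every
Hermitian operator supported in `X`, so all iterates `E^n(|v⟩⟨v|)` with `v ∈ X` stay Hermitian
and supported in `X`. On such operators the projections in `E|_Y = P_Y E(·) P_Y` act trivially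
for any `Y ⊇ X`, so reachability in the restricted chain on `Y` is plain reachability `R(v) ⊆ X`.
Strong connectivity of `X` then reads `R(v) = X`. Conversely, `R(v) = X` contains `E(|v⟩⟨v|)`,
which gives invariance, hence strong connectivity; and a strongly connected `Y ⊇ X` lies in
`R(v) = X` for any nonzero `v ∈ X`, which gives maximality.
-/

open Matrix Filter Topology
open scoped ComplexOrder

/-- The reachable space of a state `ρ`: the join of the supports of all iterates. -/
noncomputable def Reach {d m : ℕ} (E : Fin m → Matrix (Fin d) (Fin d) ℂ)
    (ρ : Matrix (Fin d) (Fin d) ℂ) : Submodule ℂ (EuclideanSpace ℂ (Fin d)) :=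
  ⨆ n : ℕ, matSupp ((krausMap E)^[n] ρ)

/-- The restriction `E|_X(A) = P_X E(A) P_X` of the super-operator to a subspace. -/
noncomputable def restrMap {d m : ℕ} (E : Fin m → Matrix (Fin d) (Fin d) ℂ)
    (X : Submodule ℂ (EuclideanSpace ℂ (Fin d))) (A : Matrix (Fin d) (Fin d) ℂ) :
    Matrix (Fin d) (Fin d) ℂ :=
  projMat X * krausMap E A * projMat X

/-- The reachable space of `ρ` inside the restricted chain on `X`. -/
noncomputable def ReachIn {d m : ℕ} (E : Fin m → Matrix (Fin d) (Fin d) ℂ)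
    (X : Submodule ℂ (EuclideanSpace ℂ (Fin d))) (ρ : Matrix (Fin d) (Fin d) ℂ) :
    Submodule ℂ (EuclideanSpace ℂ (Fin d)) :=
  ⨆ n : ℕ, matSupp ((restrMap E X)^[n] ρ)

/-- A subspace is strongly connected if any two nonzero vectors in it are mutually
reachable in the restricted chain. -/
noncomputable def StronglyConnected {d m : ℕ} (E : Fin m → Matrix (Fin d) (Fin d) ℂ)
    (X : Submodule ℂ (EuclideanSpace ℂ (Fin d))) : Prop :=
  ∀ v ∈ X, ∀ w ∈ X, v ≠ 0 → w ≠ 0 → v ∈ ReachIn E X (outer w)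

section
variable {d m : ℕ}

/-- The paper's invariance `E(X) ⊆ X`, tested on pure states. -/
def IsKrausInvariant (E : Fin m → Matrix (Fin d) (Fin d) ℂ)
    (X : Submodule ℂ (EuclideanSpace ℂ (Fin d))) : Prop :=
  ∀ ψ ∈ X, matSupp (krausMap E (outer ψ)) ≤ X

lemma matSupp_smul_le (c : ℂ) (A : Matrix (Fin d) (Fin d) ℂ) : matSupp (c • A) ≤ matSupp A := by
  rintro _ ⟨x, rfl⟩
  exact ⟨c • x, by simp⟩

lemma matSupp_sum_le {ι : Type*} [Fintype ι] (A : ι → Matrix (Fin d) (Fin d) ℂ) :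
    matSupp (∑ i, A i) ≤ ⨆ i, matSupp (A i) := by
  rintro _ ⟨x, rfl⟩
  rw [map_sum, LinearMap.sum_apply]
  exact Submodule.sum_mem _ fun i _ => Submodule.mem_iSup_of_mem i ⟨x, rfl⟩

lemma toEuclideanLin_outer (v : EuclideanSpace ℂ (Fin d)) :
    toEuclideanLin (outer v) = (InnerProductSpace.rankOne ℂ v v).toLinearMap := by
  rw [← LinearEquiv.eq_symm_apply, InnerProductSpace.symm_toEuclideanLin_rankOne]
  rfl

lemma outer_isHermitian (v : EuclideanSpace ℂ (Fin d)) : (outer v).IsHermitian := by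
  ext i j
  simp [outer, mul_comm]

lemma matSupp_outer_le {X : Submodule ℂ (EuclideanSpace ℂ (Fin d))}
    {v : EuclideanSpace ℂ (Fin d)} (hv : v ∈ X) : matSupp (outer v) ≤ X := by
  rintro _ ⟨x, rfl⟩
  rw [toEuclideanLin_outer]
  exact X.smul_mem _ hv

lemma Matrix.IsHermitian.toEuclideanLin_eigenvectorBasis {A : Matrix (Fin d) (Fin d) ℂ}
    (hA : A.IsHermitian) (i : Fin d) :
    toEuclideanLin A (hA.eigenvectorBasis i) = (hA.eigenvalues i : ℂ) • hA.eigenvectorBasis i := by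
  apply WithLp.ofLp_injective
  exact (hA.mulVec_eigenvectorBasis i).trans (RCLike.real_smul_eq_coe_smul _ _)

lemma Matrix.IsHermitian.eq_sum_smul_outer {A : Matrix (Fin d) (Fin d) ℂ} (hA : A.IsHermitian) :
    A = ∑ i, (hA.eigenvalues i : ℂ) • outer (hA.eigenvectorBasis i) := by
  apply toEuclideanLin.injective
  ext1 x
  conv_lhs => rw [← hA.eigenvectorBasis.sum_repr' x]
  simp only [map_sum, map_smul, LinearMap.sum_apply, LinearMap.smul_apply, toEuclideanLin_outer]
  refine Finset.sum_congr rfl fun i _ => ?_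
  rw [hA.toEuclideanLin_eigenvectorBasis, smul_comm]
  rfl

lemma Matrix.IsHermitian.eigenvectorBasis_mem_matSupp {A : Matrix (Fin d) (Fin d) ℂ}
    (hA : A.IsHermitian) {i : Fin d} (hi : hA.eigenvalues i ≠ 0) :
    hA.eigenvectorBasis i ∈ matSupp A := by
  refine ⟨(hA.eigenvalues i : ℂ)⁻¹ • hA.eigenvectorBasis i, ?_⟩
  rw [map_smul, hA.toEuclideanLin_eigenvectorBasis, inv_smul_smul₀ (mod_cast hi)]

lemma krausMap_isHermitian (E : Fin m → Matrix (Fin d) (Fin d) ℂ) {A : Matrix (Fin d) (Fin d) ℂ}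
    (hA : A.IsHermitian) : (krausMap E A).IsHermitian :=
  isSelfAdjoint_sum _ fun i _ => isHermitian_mul_mul_conjTranspose (E i) hA

lemma krausMap_sum_smul {ι : Type*} [Fintype ι] (E : Fin m → Matrix (Fin d) (Fin d) ℂ) (c : ι → ℂ)
    (A : ι → Matrix (Fin d) (Fin d) ℂ) :
    krausMap E (∑ i, c i • A i) = ∑ i, c i • krausMap E (A i) := by
  simp only [krausMap, Finset.sum_mul, Finset.mul_sum, Matrix.mul_smul, Matrix.smul_mul,
    Finset.smul_sum]
  exact Finset.sum_comm

lemma IsKrausInvariant.matSupp_krausMap_le {E : Fin m → Matrix (Fin d) (Fin d) ℂ}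
    {X : Submodule ℂ (EuclideanSpace ℂ (Fin d))} (hX : IsKrausInvariant E X)
    {A : Matrix (Fin d) (Fin d) ℂ} (hA : A.IsHermitian) (hAX : matSupp A ≤ X) :
    matSupp (krausMap E A) ≤ X := by
  rw [hA.eq_sum_smul_outer, krausMap_sum_smul]
  refine (matSupp_sum_le _).trans (iSup_le fun i => ?_)
  by_cases hi : hA.eigenvalues i = 0
  · simp [hi, matSupp]
  · exact (matSupp_smul_le _ _).trans (hX _ (hAX (hA.eigenvectorBasis_mem_matSupp hi)))

lemma iterate_krausMap_isHermitian (E : Fin m → Matrix (Fin d) (Fin d) ℂ)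
    {A : Matrix (Fin d) (Fin d) ℂ} (hA : A.IsHermitian) (n : ℕ) :
    ((krausMap E)^[n] A).IsHermitian :=
  Function.Iterate.rec _ hA (fun _ => krausMap_isHermitian E) n

lemma IsKrausInvariant.matSupp_iterate_krausMap_le {E : Fin m → Matrix (Fin d) (Fin d) ℂ}
    {X : Submodule ℂ (EuclideanSpace ℂ (Fin d))} (hX : IsKrausInvariant E X)
    {A : Matrix (Fin d) (Fin d) ℂ} (hA : A.IsHermitian) (hAX : matSupp A ≤ X) (n : ℕ) :
    matSupp ((krausMap E)^[n] A) ≤ X := by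
  induction n with
  | zero => exact hAX
  | succ n ih =>
    rw [Function.iterate_succ_apply']
    exact hX.matSupp_krausMap_le (iterate_krausMap_isHermitian E hA n) ih

lemma projMat_isHermitian (X : Submodule ℂ (EuclideanSpace ℂ (Fin d))) :
    (projMat X).IsHermitian := by
  rw [← isSymmetric_toEuclideanLin_iff, projMat, LinearEquiv.apply_symm_apply]
  exact X.starProjection_isSymmetric

lemma projMat_mul_of_matSupp_le_s11 {X : Submodule ℂ (EuclideanSpace ℂ (Fin d))}
    {A : Matrix (Fin d) (Fin d) ℂ} (hAX : matSupp A ≤ X) : projMat X * A = A := by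
  apply toEuclideanLin.injective
  ext1 x
  rw [toLpLin_mul_same, LinearMap.comp_apply, projMat, LinearEquiv.apply_symm_apply]
  exact X.starProjection_eq_self_iff.mpr (hAX ⟨x, rfl⟩)

lemma projMat_mul_mul_projMat_of_matSupp_le {X : Submodule ℂ (EuclideanSpace ℂ (Fin d))}
    {A : Matrix (Fin d) (Fin d) ℂ} (hA : A.IsHermitian) (hAX : matSupp A ≤ X) :
    projMat X * A * projMat X = A := by
  have hAP : A * projMat X = A := by
    simpa [conjTranspose_mul, hA.eq, (projMat_isHermitian X).eq] using
      congr_arg conjTranspose (projMat_mul_of_matSupp_le_s11 hAX)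
  rw [Matrix.mul_assoc, hAP, projMat_mul_of_matSupp_le_s11 hAX]

lemma IsKrausInvariant.iterate_restrMap_eq {E : Fin m → Matrix (Fin d) (Fin d) ℂ}
    {X Y : Submodule ℂ (EuclideanSpace ℂ (Fin d))} (hX : IsKrausInvariant E X) (hXY : X ≤ Y)
    {A : Matrix (Fin d) (Fin d) ℂ} (hA : A.IsHermitian) (hAX : matSupp A ≤ X) (n : ℕ) :
    (restrMap E Y)^[n] A = (krausMap E)^[n] A := by
  induction n with
  | zero => rfl
  | succ n ih =>
    rw [Function.iterate_succ_apply', Function.iterate_succ_apply', ih, restrMap,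
      ← Function.iterate_succ_apply' (krausMap E)]
    exact projMat_mul_mul_projMat_of_matSupp_le (iterate_krausMap_isHermitian E hA _)
      ((hX.matSupp_iterate_krausMap_le hA hAX _).trans hXY)

lemma IsKrausInvariant.reachIn_outer_eq_reach {E : Fin m → Matrix (Fin d) (Fin d) ℂ}
    {X Y : Submodule ℂ (EuclideanSpace ℂ (Fin d))} (hX : IsKrausInvariant E X) (hXY : X ≤ Y)
    {v : EuclideanSpace ℂ (Fin d)} (hv : v ∈ X) :
    ReachIn E Y (outer v) = Reach E (outer v) :=
  iSup_congr fun n => by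
    rw [hX.iterate_restrMap_eq hXY (outer_isHermitian v) (matSupp_outer_le hv)]

lemma IsKrausInvariant.reach_outer_le {E : Fin m → Matrix (Fin d) (Fin d) ℂ}
    {X : Submodule ℂ (EuclideanSpace ℂ (Fin d))} (hX : IsKrausInvariant E X)
    {v : EuclideanSpace ℂ (Fin d)} (hv : v ∈ X) : Reach E (outer v) ≤ X :=
  iSup_le (hX.matSupp_iterate_krausMap_le (outer_isHermitian v) (matSupp_outer_le hv))

lemma matSupp_krausMap_le_reach (E : Fin m → Matrix (Fin d) (Fin d) ℂ)
    (A : Matrix (Fin d) (Fin d) ℂ) : matSupp (krausMap E A) ≤ Reach E A :=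
  le_iSup (fun n => matSupp ((krausMap E)^[n] A)) 1

lemma isKrausInvariant_of_forall_reach_outer_eq {E : Fin m → Matrix (Fin d) (Fin d) ℂ}
    {X : Submodule ℂ (EuclideanSpace ℂ (Fin d))}
    (h : ∀ v ∈ X, v ≠ 0 → Reach E (outer v) = X) : IsKrausInvariant E X := by
  intro ψ hψ
  rcases eq_or_ne ψ 0 with rfl | hψ0
  · have h0 : outer (0 : EuclideanSpace ℂ (Fin d)) = 0 := by ext; simp [outer]
    simp [h0, krausMap, matSupp]
  · exact h ψ hψ hψ0 ▸ matSupp_krausMap_le_reach E (outer ψ)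

end

theorem stmt11_general {d m : ℕ} (E : Fin m → Matrix (Fin d) (Fin d) ℂ)
    (X : Submodule ℂ (EuclideanSpace ℂ (Fin d))) (hX : X ≠ ⊥) :
    (StronglyConnected E X ∧
      (∀ Y : Submodule ℂ (EuclideanSpace ℂ (Fin d)), StronglyConnected E Y → X ≤ Y → X = Y) ∧
      (∀ ψ : EuclideanSpace ℂ (Fin d), ψ ∈ X → matSupp (krausMap E (outer ψ)) ≤ X)) ↔
    (∀ v : EuclideanSpace ℂ (Fin d), v ∈ X → v ≠ 0 → Reach E (outer v) = X) := by
  constructor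
  · rintro ⟨hSC, -, hinv : IsKrausInvariant E X⟩ v hv hv0
    refine le_antisymm (hinv.reach_outer_le hv) fun w hw => ?_
    rcases eq_or_ne w 0 with rfl | hw0
    · exact zero_mem _
    · simpa only [hinv.reachIn_outer_eq_reach le_rfl hv] using hSC w hw v hv hw0 hv0
  · intro h
    have hinv := isKrausInvariant_of_forall_reach_outer_eq h
    refine ⟨fun v hv w hw _ hw0 => ?_, fun Y hY hXY => le_antisymm hXY fun w hw => ?_, hinv⟩
    · rwa [hinv.reachIn_outer_eq_reach le_rfl hw, h w hw hw0]
    · obtain ⟨v, hv, hv0⟩ := (Submodule.ne_bot_iff X).mp hX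
      rcases eq_or_ne w 0 with rfl | hw0
      · exact zero_mem _
      · rw [← h v hv hv0, ← hinv.reachIn_outer_eq_reach hXY hv]
        exact hY w hw v (hXY hv) hw0 hv0

/-- A nonzero subspace is a BSCC (a maximal strongly connected subspace which is
invariant) iff the reachable space of every nonzero vector in it is the whole subspace. -/
theorem stmt11 {d m : ℕ} (E : Fin m → Matrix (Fin d) (Fin d) ℂ)
    (hE : ∑ i, (E i)ᴴ * E i = 1)
    (X : Submodule ℂ (EuclideanSpace ℂ (Fin d))) (hX : X ≠ ⊥) :
    (StronglyConnected E X ∧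
      (∀ Y : Submodule ℂ (EuclideanSpace ℂ (Fin d)), StronglyConnected E Y → X ≤ Y → X = Y) ∧
      (∀ ψ : EuclideanSpace ℂ (Fin d), ψ ∈ X → matSupp (krausMap E (outer ψ)) ≤ X)) ↔
    (∀ v : EuclideanSpace ℂ (Fin d), v ∈ X → v ≠ 0 → Reach E (outer v) = X) :=
  stmt11_general E X hX
end
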